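/- arXiv:2301.11588 — 6 statements merged into one kernel-verified Lean document; each statement's English description precedes it below -/
import Mathlib

section
/- Fix positive integers M and k. Let u ∈ ℝ^M and l^{(1)},…,l^{(k)} ∈ ℝ^M, and let D = Dom({l^{(1)},…,l^{(k)}}) be the dominated region of the finite set {l^{(1)},…,l^{(k)}}. Then the infimum distance (in the sup-metric) from u to D satisfies infDist(u, D) = max( min_{1≤i≤k} max_{1≤j≤M} (u_j − l^{(i)}_j), 0 ). -/
/-!
Translating `u` down by `t = max (⨆ j, (u j - a j)) 0` in every coordinate lands in `Iic a` at
sup-distance `t`, and no point `y ≤ a` is closer since `u j - a j ≤ u j - y j ≤ dist u y`.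
The dominated region is the finite union of the boxes `Iic (l i)`, and the distance to a finite
union of nonempty sets is the least of the distances; `max · 0` commutes with that minimum.
-/

open Set Metric

theorem Metric.infDist_iUnion_of_finite {α ι : Type*} [PseudoMetricSpace α] [Finite ι]
    [Nonempty ι] (x : α) {s : ι → Set α} (hs : ∀ i, (s i).Nonempty) :
    infDist x (⋃ i, s i) = ⨅ i, infDist x (s i) := by
  have hbdd : BddBelow (range fun i => infDist x (s i)) := (finite_range _).bddBelow
  refine le_antisymm (le_ciInf fun i => infDist_le_infDist_of_subset (subset_iUnion s i) (hs i)) ?_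
  obtain ⟨i⟩ := ‹Nonempty ι›
  refine (le_infDist ⟨_, mem_iUnion_of_mem i (hs i).some_mem⟩).2 fun y hy => ?_
  obtain ⟨j, hyj⟩ := mem_iUnion.1 hy
  exact (ciInf_le hbdd j).trans (infDist_le_dist_of_mem hyj)

theorem Metric.infDist_Iic_pi {ι : Type*} [Fintype ι] (u a : ι → ℝ) :
    infDist u (Iic a) = max (⨆ j, (u j - a j)) 0 := by
  set t := max (⨆ j, (u j - a j)) 0
  have ht : 0 ≤ t := le_max_right _ _
  refine le_antisymm ?_ ((le_infDist nonempty_Iic).2 fun y hy => ?_)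
  · have hmem : (fun j => u j - t) ∈ Iic a := fun j => by
      have : u j - a j ≤ ⨆ j, (u j - a j) :=
        le_ciSup (f := fun j => u j - a j) (finite_range _).bddAbove j
      linarith [le_max_left (⨆ j, (u j - a j)) 0]
    refine (infDist_le_dist_of_mem hmem).trans ((dist_pi_le_iff ht).2 fun j => ?_)
    simp [abs_of_nonneg ht]
  · refine max_le (Real.iSup_le (fun j => ?_) dist_nonneg) dist_nonneg
    calc u j - a j ≤ u j - y j := by linarith [mem_Iic.1 hy j]
      _ ≤ |u j - y j| := le_abs_self _
      _ ≤ dist u y := by simpa only [Real.dist_eq] using dist_le_pi_dist u y j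

theorem stmt0_general (M k : ℕ) (hk : 0 < k)
    (u : Fin M → ℝ) (l : Fin k → Fin M → ℝ) :
    Metric.infDist u {s : Fin M → ℝ | ∃ i : Fin k, s ≤ l i} =
      max (⨅ i : Fin k, ⨆ j : Fin M, (u j - l i j)) 0 := by
  have : Nonempty (Fin k) := ⟨⟨0, hk⟩⟩
  have hmax : Monotone fun x : ℝ => max x 0 := fun _ _ h => max_le_max_right 0 h
  rw [show {s | ∃ i, s ≤ l i} = ⋃ i, Iic (l i) from ofPred_exists _,
    infDist_iUnion_of_finite u fun i => nonempty_Iic]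
  simp only [infDist_Iic_pi]
  exact (hmax.map_ciInf_of_continuousAt (continuousAt_id.max continuousAt_const)
    (finite_range _).bddBelow).symm

/-- The infimum sup-metric distance from `u` to the dominated region of the
finite set `{l 1, …, l k}` equals `max (min_i max_j (u j - l i j)) 0`. -/
theorem stmt0 (M k : ℕ) (hM : 0 < M) (hk : 0 < k)
    (u : Fin M → ℝ) (l : Fin k → Fin M → ℝ) :
    Metric.infDist u {s : Fin M → ℝ | ∃ i : Fin k, s ≤ l i} =
      max (⨅ i : Fin k, ⨆ j : Fin M, (u j - l i j)) 0 :=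
  stmt0_general M k hk u l
end

section
/- Let 𝓧 be a nonempty finite set, M a positive integer, and L, U, F : 𝓧 → ℝ^M functions satisfying L(x) ≤ F(x) and F(x) ≤ U(x) (componentwise) for every x ∈ 𝓧. Let Π̂ = {x ∈ 𝓧 : L(x) ∈ Par(L(𝓧))} and A = max_{x∈𝓧} infDist(U(x), Dom(L(Π̂))). Then: (i) for every y ∈ Par(F(𝓧)), infDist(y, Par(F(Π̂))) ≤ A; and (ii) for every y ∈ F(Π̂), infDist(y, Par(F(𝓧))) ≤ A. -/
/-!
Everything is controlled by the margin `m_f(y) = max_a min_i (f a i - y i)`, the largest `t` with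
`y + t • 1 ∈ Dom (range f)`. It decreases exactly by `t` along the diagonal direction and is
`1`-Lipschitz for the sup-metric, so `Dom = {m_f ≥ 0}`, `Par = {m_f = 0}` and
`infDist y Par = |m_f y|`. Both claims then become inequalities between margins: the margin is
monotone in the family, `m_F ≤ m_U` and `m_{L|Π̂} ≤ m_{F|Π̂} ≤ m_F`, and the definition of `A`
gives `m_U ≤ m_{L|Π̂} + A`.
-/

/-- The dominated region of a set `B ⊆ ℝ^M` (with the componentwise order). -/
def Dom {M : ℕ} (B : Set (Fin M → ℝ)) : Set (Fin M → ℝ) :=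
  {s | ∃ s' ∈ B, s ≤ s'}

/-- The Pareto front of `B`: the topological frontier of its dominated region. -/
def Par {M : ℕ} (B : Set (Fin M → ℝ)) : Set (Fin M → ℝ) :=
  frontier (Dom B)

open Set Metric

noncomputable def domMargin {α ι : Type*} (f : α → ι → ℝ) (y : ι → ℝ) : ℝ :=
  ⨆ a, ⨅ i, (f a i - y i)

section domMargin

variable {α β ι : Type*} [Finite α]

lemma iInf_sub_le_domMargin (f : α → ι → ℝ) (y : ι → ℝ) (a : α) :
    ⨅ i, (f a i - y i) ≤ domMargin f y :=
  Finite.le_ciSup (fun a => ⨅ i, (f a i - y i)) a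

lemma exists_iInf_sub_eq_domMargin [Nonempty α] (f : α → ι → ℝ) (y : ι → ℝ) :
    ∃ a, ⨅ i, (f a i - y i) = domMargin f y :=
  exists_eq_ciSup_of_finite

lemma domMargin_comp_le [Nonempty β] (f : α → ι → ℝ) (e : β → α) (y : ι → ℝ) :
    domMargin (fun b => f (e b)) y ≤ domMargin f y :=
  ciSup_le fun b => iInf_sub_le_domMargin f y (e b)

lemma domMargin_apply_self_nonneg [Nonempty ι] (f : α → ι → ℝ) (a : α) :
    0 ≤ domMargin f (f a) :=
  (le_ciInf fun i => (sub_self (f a i)).ge).trans (iInf_sub_le_domMargin f (f a) a)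

variable [Fintype ι]

lemma domMargin_mono {f g : α → ι → ℝ} (hfg : ∀ a, f a ≤ g a) (y : ι → ℝ) :
    domMargin f y ≤ domMargin g y :=
  Finite.ciSup_mono fun a => Finite.ciInf_mono fun i => sub_le_sub_right (hfg a i) _

variable [Nonempty α] [Nonempty ι]

lemma domMargin_add_iInf_sub_le (f : α → ι → ℝ) (y z : ι → ℝ) :
    domMargin f z + ⨅ i, (z i - y i) ≤ domMargin f y := by
  rw [← le_sub_iff_add_le]
  refine ciSup_le fun a => le_sub_iff_add_le.2 ?_
  refine (le_ciInf fun i => ?_).trans (iInf_sub_le_domMargin f y a)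
  calc (⨅ i, (f a i - z i)) + ⨅ i, (z i - y i)
      ≤ (f a i - z i) + (z i - y i) :=
        add_le_add (Finite.ciInf_le _ i) (Finite.ciInf_le _ i)
    _ = f a i - y i := by ring

lemma domMargin_antitone (f : α → ι → ℝ) : Antitone (domMargin f) := fun y z hyz => by
  have : 0 ≤ ⨅ i, (z i - y i) := le_ciInf fun i => sub_nonneg.2 (hyz i)
  linarith [domMargin_add_iInf_sub_le f y z]

lemma domMargin_add_const (f : α → ι → ℝ) (y : ι → ℝ) (t : ℝ) :
    domMargin f (y + fun _ => t) = domMargin f y - t := by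
  have h₁ := domMargin_add_iInf_sub_le f y (y + fun _ => t)
  have h₂ := domMargin_add_iInf_sub_le f (y + fun _ => t) y
  simp only [Pi.add_apply, add_sub_cancel_left, sub_add_cancel_left, ciInf_const] at h₁ h₂
  linarith

lemma domMargin_le_add_dist (f : α → ι → ℝ) (y z : ι → ℝ) :
    domMargin f z ≤ domMargin f y + dist y z := by
  have : -dist y z ≤ ⨅ i, (z i - y i) := le_ciInf fun i => by
    have := dist_le_pi_dist y z i
    rw [Real.dist_eq, abs_sub_comm] at this
    linarith [neg_abs_le (z i - y i)]
  linarith [domMargin_add_iInf_sub_le f y z]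

lemma lipschitzWith_domMargin (f : α → ι → ℝ) : LipschitzWith 1 (domMargin f) :=
  LipschitzWith.of_dist_le_mul fun y z => by
    rw [NNReal.coe_one, one_mul, Real.dist_eq, abs_sub_le_iff]
    constructor
    · linarith [domMargin_le_add_dist f z y, dist_comm y z]
    · linarith [domMargin_le_add_dist f y z]

lemma domMargin_le_add_of_forall {f : α → ι → ℝ} {g : β → ι → ℝ} {c : ℝ} [Nonempty β]
    (h : ∀ b, -c ≤ domMargin f (g b)) (y : ι → ℝ) :
    domMargin g y ≤ domMargin f y + c :=
  ciSup_le fun b => by linarith [h b, domMargin_add_iInf_sub_le f y (g b)]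

lemma domMargin_nonpos_of_maximal {f : α → ι → ℝ} {y : ι → ℝ}
    (hy : Maximal (· ∈ range f) y) : domMargin f y ≤ 0 := by
  by_contra! hpos
  obtain ⟨a, ha⟩ := exists_iInf_sub_eq_domMargin f y
  have hlt : ∀ i, y i < f a i := fun i => by
    linarith [Finite.ciInf_le (fun i => f a i - y i) i]
  have hle : f a ≤ y := hy.2 (mem_range_self a) fun i => (hlt i).le
  obtain ⟨i⟩ := ‹Nonempty ι›
  exact (hle i).not_gt (hlt i)

end domMargin

section ParetoFront

variable {α : Type*} [Finite α] [Nonempty α] {M : ℕ} [Nonempty (Fin M)]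

lemma mem_Dom_range_iff (f : α → Fin M → ℝ) (y : Fin M → ℝ) :
    y ∈ Dom (range f) ↔ 0 ≤ domMargin f y := by
  constructor
  · rintro ⟨_, ⟨a, rfl⟩, hy⟩
    exact (domMargin_apply_self_nonneg f a).trans (domMargin_antitone f hy)
  · intro h
    obtain ⟨a, ha⟩ := exists_iInf_sub_eq_domMargin f y
    refine ⟨f a, mem_range_self a, fun i => ?_⟩
    linarith [Finite.ciInf_le (fun i => f a i - y i) i]

lemma Dom_range_eq (f : α → Fin M → ℝ) : Dom (range f) = {y | 0 ≤ domMargin f y} :=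
  Set.ext (mem_Dom_range_iff f)

lemma mem_Par_range_iff (f : α → Fin M → ℝ) (y : Fin M → ℝ) :
    y ∈ Par (range f) ↔ domMargin f y = 0 := by
  have hcont := (lipschitzWith_domMargin f).continuous
  rw [Par, Dom_range_eq]
  refine ⟨fun hy => (frontier_le_subset_eq continuous_const hcont hy).symm, fun hy => ?_⟩
  rw [frontier_eq_closure_inter_closure]
  refine ⟨subset_closure hy.ge, ?_⟩
  -- approach `y` along the diagonal from above, where the margin is negative
  have hshift : Continuous fun t : ℝ => y + fun _ => t :=
    continuous_const.add (continuous_pi fun _ => continuous_id)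
  have hlim : Filter.Tendsto (fun t : ℝ => y + fun _ => t) (nhdsWithin 0 (Ioi 0)) (nhds y) := by
    convert (hshift.tendsto 0).mono_left nhdsWithin_le_nhds using 2
    exact (add_zero y).symm
  refine mem_closure_of_tendsto hlim (eventually_nhdsWithin_of_forall fun t (ht : 0 < t) => ?_)
  simp only [mem_compl_iff, mem_ofPred_eq, domMargin_add_const, hy, not_le]
  linarith

lemma infDist_Par_range (f : α → Fin M → ℝ) (y : Fin M → ℝ) :
    infDist y (Par (range f)) = |domMargin f y| := by
  have hmem : (y + fun _ => domMargin f y) ∈ Par (range f) := by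
    rw [mem_Par_range_iff, domMargin_add_const, sub_self]
  refine le_antisymm ?_ ((le_infDist ⟨_, hmem⟩).2 fun z hz => ?_)
  · calc infDist y (Par (range f)) ≤ dist y (y + fun _ => domMargin f y) :=
          infDist_le_dist_of_mem hmem
      _ = |domMargin f y| := by rw [dist_self_add_right, pi_norm_const, Real.norm_eq_abs]
  · rw [mem_Par_range_iff] at hz
    simpa [hz] using (lipschitzWith_domMargin f).dist_le_mul y z

lemma neg_domMargin_le_infDist_Dom_range (f : α → Fin M → ℝ) (y : Fin M → ℝ) :
    -domMargin f y ≤ infDist y (Dom (range f)) := by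
  obtain ⟨a⟩ := ‹Nonempty α›
  refine (le_infDist ⟨f a, (mem_Dom_range_iff f _).2 (domMargin_apply_self_nonneg f a)⟩).2
    fun z hz => ?_
  rw [mem_Dom_range_iff] at hz
  linarith [domMargin_le_add_dist f y z]

lemma exists_apply_mem_Par_range (f : α → Fin M → ℝ) : ∃ a, f a ∈ Par (range f) := by
  obtain ⟨_, ha⟩ := (finite_range f).exists_maximal (range_nonempty f)
  obtain ⟨a, rfl⟩ := ha.prop
  exact ⟨a, (mem_Par_range_iff f _).2
    ((domMargin_nonpos_of_maximal ha).antisymm (domMargin_apply_self_nonneg f a))⟩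

end ParetoFront

theorem stmt1 (𝓧 : Type*) [Fintype 𝓧] [Nonempty 𝓧] {M : ℕ} (hM : 0 < M)
    (L U F : 𝓧 → (Fin M → ℝ))
    (hLF : ∀ x, L x ≤ F x) (hFU : ∀ x, F x ≤ U x)
    (Pihat : Set 𝓧) (hPi : Pihat = {x | L x ∈ Par (Set.range L)})
    (A : ℝ) (hA : A = ⨆ x : 𝓧, Metric.infDist (U x) (Dom (L '' Pihat))) :
    (∀ y ∈ Par (Set.range F), Metric.infDist y (Par (F '' Pihat)) ≤ A) ∧
    (∀ y ∈ F '' Pihat, Metric.infDist y (Par (Set.range F)) ≤ A) := by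
  have : Nonempty (Fin M) := ⟨⟨0, hM⟩⟩
  have hPar : ∀ x ∈ Pihat, domMargin L (L x) = 0 := by
    simp only [hPi, mem_ofPred_eq, mem_Par_range_iff, imp_self, implies_true]
  have : Nonempty Pihat := by
    obtain ⟨x, hx⟩ := exists_apply_mem_Par_range L
    exact ⟨x, hPi ▸ hx⟩
  rw [image_eq_range] at hA ⊢
  have hU : ∀ y, domMargin U y ≤ domMargin (fun x : Pihat => L x) y + A :=
    domMargin_le_add_of_forall fun x => by
      have hx : infDist (U x) (Dom (range fun x : Pihat => L x)) ≤ A :=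
        hA ▸ Finite.le_ciSup (fun x => infDist (U x) _) x
      linarith [neg_domMargin_le_infDist_Dom_range (fun x : Pihat => L x) (U x)]
  refine ⟨fun y hy => ?_, ?_⟩
  · rw [mem_Par_range_iff] at hy
    rw [infDist_Par_range, abs_le]
    have hLF' := domMargin_mono (fun x : Pihat => hLF x) y
    have hsub := domMargin_comp_le F (Subtype.val : Pihat → 𝓧) y
    have hFU' := domMargin_mono hFU y
    constructor <;> linarith [hU y]
  · rintro _ ⟨⟨x, hx⟩, rfl⟩
    rw [infDist_Par_range, abs_of_nonneg (domMargin_apply_self_nonneg F x)]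
    calc domMargin F (F x) ≤ domMargin U (F x) := domMargin_mono hFU _
      _ ≤ domMargin U (L x) := domMargin_antitone U (hLF x)
      _ ≤ domMargin (fun x : Pihat => L x) (L x) + A := hU _
      _ ≤ domMargin L (L x) + A := by gcongr; exact domMargin_comp_le L _ _
      _ = A := by rw [hPar x hx, zero_add]
end

section
/- Let 𝓧 be a nonempty finite set, M a positive integer, ε_lcb, ε_ucb, ε_𝓧 ≥ 0, and L, U, F : 𝓧 → ℝ^M functions satisfying L(x)_j − ε_lcb ≤ F(x)_j and F(x)_j ≤ U(x)_j + ε_ucb for every x ∈ 𝓧 and every coordinate j. Let Π̂ = {x ∈ 𝓧 : L(x) ∈ Par(L(𝓧))}, and suppose x* ∈ 𝓧 satisfies max_{x∈𝓧} infDist(U(x), Dom(L(Π̂))) − infDist(U(x*), Dom(L(Π̂))) ≤ ε_𝓧. Then: (i) for every y ∈ Par(F(𝓧)), infDist(y, Par(F(Π̂))) ≤ infDist(U(x*), Dom(L(Π̂))) + ε_lcb + ε_ucb + ε_𝓧; and (ii) for every y ∈ F(Π̂), infDist(y, Par(F(𝓧))) ≤ infDist(U(x*), Dom(L(Π̂)))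 + ε_lcb + ε_ucb + ε_𝓧. -/
/-!
Every `U x` lies within `r = infDist (U x*) (Dom (L '' Π̂)) + ε_𝓧` of `Dom (L '' Π̂)`, so each
`F x` is dominated up to `r + ε_lcb + ε_ucb` by some `F x'` with `x' ∈ Π̂`, while `F x` never
strictly dominates a point of `F '' Π̂` by more than that amount, because `L '' Π̂` is itself
Pareto optimal. In both parts one therefore moves from `y` along the diagonal `(1, …, 1)` by at
most this amount, from a point of the closure of a dominated region to a point outside its
interior; the segment joining them is connected, so it meets the Pareto front.
-/

open Metric Set

theorem IsPreconnected.exists_mem_frontier {X : Type*} [TopologicalSpace X] {s t : Set X}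
    (hs : IsPreconnected s) {a b : X} (ha : a ∈ s) (hb : b ∈ s) (hat : a ∈ closure t)
    (hbt : b ∉ interior t) : ∃ z ∈ s, z ∈ frontier t := by
  by_contra! h
  have hsub : closure t ∩ s ⊆ interior t := fun z ⟨hzt, hzs⟩ =>
    by_contra fun hz => h z hzs ⟨hzt, hz⟩
  exact hbt (hs.subset_of_closure_inter_subset isOpen_interior ⟨a, ha, hsub ⟨hat, ha⟩⟩
    ((inter_subset_inter_left _ (closure_mono interior_subset)).trans hsub) hb)

section Pareto

variable {M : ℕ} {B C : Set (Fin M → ℝ)} {b y : Fin M → ℝ} {c : ℝ}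

theorem subset_Dom : B ⊆ Dom B := fun b hb => ⟨b, hb, le_rfl⟩

theorem Dom_mono (h : B ⊆ C) : Dom B ⊆ Dom C := fun _ ⟨b, hb, hyb⟩ => ⟨b, h hb, hyb⟩

theorem isLowerSet_Dom : IsLowerSet (Dom B) :=
  fun _ _ hle ⟨b, hb, h⟩ => ⟨b, hb, hle.trans h⟩

theorem isClosed_Dom (hB : B.Finite) : IsClosed (Dom B) := by
  have : Dom B = ⋃ b ∈ B, Iic b := by ext; simp [Dom]
  rw [this]
  exact hB.isClosed_biUnion fun b _ => isClosed_Iic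

theorem mem_Dom_of_mem_Par (hB : B.Finite) (hy : y ∈ Par B) : y ∈ Dom B :=
  (isClosed_Dom hB).closure_subset hy.1

theorem exists_le_of_mem_Par (hy : y ∈ Par B) (hb : b ∈ B) : ∃ j, b j ≤ y j := by
  by_contra! h
  exact hy.2 (isLowerSet_Dom.mem_interior_of_forall_lt (subset_closure (subset_Dom hb)) h)

theorem notMem_interior_Dom (h : ∀ b ∈ B, ∃ j, b j ≤ y j) : y ∉ interior (Dom B) := by
  intro hy
  obtain ⟨ε, hε, hball⟩ := Metric.mem_nhds_iff.1 (mem_interior_iff_mem_nhds.1 hy)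
  have hshift : y + Function.const _ (ε / 2) ∈ ball y ε := by
    rw [mem_ball, dist_self_add_left]
    refine (pi_norm_const_le (ε / 2)).trans_lt ?_
    rw [Real.norm_of_nonneg (half_pos hε).le]
    exact half_lt_self hε
  obtain ⟨b, hb, hyb⟩ := hball hshift
  obtain ⟨j, hj⟩ := h b hb
  have := hyb j
  simp only [Pi.add_apply, Function.const_apply] at this
  linarith

theorem mem_Par_of_maximal (hM : 0 < M) (hb : Maximal (· ∈ B) b) : b ∈ Par B := by
  refine ⟨subset_closure (subset_Dom hb.prop), notMem_interior_Dom fun b' hb' => ?_⟩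
  by_contra! h
  exact (h ⟨0, hM⟩).not_ge (hb.le_of_ge hb' (fun j => (h j).le) ⟨0, hM⟩)

theorem exists_le_add_of_infDist_Dom_le (hB : B.Finite) (hne : B.Nonempty)
    (h : infDist y (Dom B) ≤ c) : ∃ b ∈ B, ∀ j, y j ≤ b j + c := by
  obtain ⟨z, ⟨b, hb, hzb⟩, hyz⟩ :=
    (isClosed_Dom hB).exists_infDist_eq_dist (hne.mono subset_Dom) y
  refine ⟨b, hb, fun j => ?_⟩
  have hj : dist (y j) (z j) ≤ dist y z := dist_le_pi_dist y z j
  rw [Real.dist_eq] at hj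
  linarith [le_abs_self (y j - z j), hzb j]

theorem infDist_Par_le_of_le_add (hc : 0 ≤ c) (hy : y ∉ interior (Dom B)) (hb : b ∈ B)
    (hyb : ∀ j, y j ≤ b j + c) : infDist y (Par B) ≤ c := by
  have hlow : y - Function.const _ c ∈ closure (Dom B) :=
    subset_closure ⟨b, hb, fun j => by simp [hyb j]⟩
  obtain ⟨z, hz, hzPar⟩ := (convex_segment _ y).isPreconnected.exists_mem_frontier
    (left_mem_segment ℝ _ y) (right_mem_segment ℝ _ y) hlow hy
  calc infDist y (Par B) ≤ dist z y := by rw [dist_comm]; exact infDist_le_dist_of_mem hzPar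
    _ ≤ dist (y - Function.const _ c) y := by
        exact (le_add_of_nonneg_left dist_nonneg).trans_eq (dist_add_dist_of_mem_segment hz)
    _ ≤ c := by
        rw [dist_self_sub_left]
        exact (pi_norm_const_le c).trans (Real.norm_of_nonneg hc).le

theorem infDist_Par_le_of_forall_exists_le (hc : 0 ≤ c) (hy : y ∈ Dom B)
    (h : ∀ b ∈ B, ∃ j, b j ≤ y j + c) : infDist y (Par B) ≤ c := by
  have hhigh : y + Function.const _ c ∉ interior (Dom B) := notMem_interior_Dom fun b hb => by
    simpa using h b hb
  obtain ⟨z, hz, hzPar⟩ := (convex_segment y _).isPreconnected.exists_mem_frontier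
    (left_mem_segment ℝ y _) (right_mem_segment ℝ y _) (subset_closure hy) hhigh
  calc infDist y (Par B) ≤ dist y z := infDist_le_dist_of_mem hzPar
    _ ≤ dist y (y + Function.const _ c) := by
        exact (le_add_of_nonneg_right dist_nonneg).trans_eq (dist_add_dist_of_mem_segment hz)
    _ ≤ c := by
        rw [dist_self_add_right]
        exact (pi_norm_const_le c).trans (Real.norm_of_nonneg hc).le

end Pareto

theorem stmt2 (𝓧 : Type*) [Fintype 𝓧] [Nonempty 𝓧] {M : ℕ} (hM : 0 < M)
    (εlcb εucb εX : ℝ) (hεlcb : 0 ≤ εlcb) (hεucb : 0 ≤ εucb) (hεX : 0 ≤ εX)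
    (L U F : 𝓧 → (Fin M → ℝ))
    (h1 : ∀ x j, L x j - εlcb ≤ F x j) (h2 : ∀ x j, F x j ≤ U x j + εucb)
    (Pihat : Set 𝓧) (hPi : Pihat = {x | L x ∈ Par (Set.range L)})
    (xstar : 𝓧)
    (hx : (⨆ x : 𝓧, Metric.infDist (U x) (Dom (L '' Pihat)))
            - Metric.infDist (U xstar) (Dom (L '' Pihat)) ≤ εX) :
    (∀ y ∈ Par (Set.range F), Metric.infDist y (Par (F '' Pihat)) ≤
        Metric.infDist (U xstar) (Dom (L '' Pihat)) + εlcb + εucb + εX) ∧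
    (∀ y ∈ F '' Pihat, Metric.infDist y (Par (Set.range F)) ≤
        Metric.infDist (U xstar) (Dom (L '' Pihat)) + εlcb + εucb + εX) := by
  set r := infDist (U xstar) (Dom (L '' Pihat)) + εX
  have hc : 0 ≤ r + εlcb + εucb := by
    linarith [infDist_nonneg (x := U xstar) (s := Dom (L '' Pihat))]
  have hPihat : Pihat.Nonempty := by
    obtain ⟨_, hmax⟩ := (finite_range L).exists_maximal (range_nonempty L)
    obtain ⟨x, rfl⟩ := hmax.prop
    exact ⟨x, hPi ▸ mem_Par_of_maximal hM hmax⟩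
  have hFL : ∀ x, ∃ x' ∈ Pihat, ∀ j, F x j ≤ L x' j + (r + εucb) := by
    intro x
    have hUx : infDist (U x) (Dom (L '' Pihat)) ≤ r := by
      linarith [le_ciSup (finite_range fun x => infDist (U x) (Dom (L '' Pihat))).bddAbove x]
    obtain ⟨_, ⟨x', hx', rfl⟩, hUL⟩ :=
      exists_le_add_of_infDist_Dom_le ((toFinite Pihat).image L) (hPihat.image L) hUx
    exact ⟨x', hx', fun j => by linarith [h2 x j, hUL j]⟩
  rw [show infDist (U xstar) (Dom (L '' Pihat)) + εlcb + εucb + εX = r + εlcb + εucb by ring]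
  refine ⟨fun y hy => ?_, ?_⟩
  · obtain ⟨_, ⟨x, rfl⟩, hyx⟩ := mem_Dom_of_mem_Par (finite_range F) hy
    obtain ⟨x', hx', hxx'⟩ := hFL x
    refine infDist_Par_le_of_le_add hc (fun hint => hy.2 ?_) (mem_image_of_mem F hx')
      fun j => by linarith [hyx j, hxx' j, h1 x' j]
    exact interior_mono (Dom_mono (image_subset_range F Pihat)) hint
  · rintro _ ⟨xh, hxh, rfl⟩
    rw [hPi] at hxh
    refine infDist_Par_le_of_forall_exists_le hc (subset_Dom (mem_range_self xh)) ?_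
    rintro _ ⟨x, rfl⟩
    obtain ⟨x', -, hxx'⟩ := hFL x
    obtain ⟨j, hj⟩ := exists_le_of_mem_Par hxh (mem_range_self x')
    exact ⟨j, by linarith [hxx' j, h1 xh j]⟩
end

section
/- Let P be a probability measure on a measurable space Ω, and let l, f, u : Ω → ℝ be measurable functions for which there exists C ≥ 0 with |l(ω)| ≤ C and |u(ω)| ≤ C for all ω, and such that l(ω) ≤ f(ω) ≤ u(ω) for all ω ∈ Ω. Set μ_l = ∫ l dP, μ_u = ∫ u dP, m = ∫ f dP, and define ľ(ω) = l(ω) − μ_u and ǔ(ω) = u(ω) − μ_l. Then ∫ ( min{|ľ(ω)|, |ǔ(ω)|} − STR(ľ(ω), ǔ(ω)) ) dP(ω) ≤ ∫ |f(ω) − m| dP(ω) ≤ ∫ max{|ľ(ω)|, |ǔ(ω)|} dP(ω). Moreover, if additionally u(ω) − l(ω) ≤ c for all ω ∈ Ω, then ∫ max{|ľ|, |ǔ|} dP − ∫ ( min{|ľ|, |ǔ|} − STR(ľ, ǔ) ) dP ≤ 2c. -/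
/-!
Put `a = l - ∫ u`, `x = f - ∫ f`, `b = u - ∫ l`. Since `∫ l ≤ ∫ f ≤ ∫ u`, we have `a ≤ x ≤ b`
pointwise, and both bounds on the mean absolute deviation `∫ |x|` follow by integrating
elementary bounds on `|x|` in terms of the endpoints `a ≤ x ≤ b`. The gap between the two
integrands is at most `b - a`, whose integral is `(∫ u - ∫ l) + (∫ u - ∫ l) ≤ 2c`.
-/

open MeasureTheory

/-- `STR(a,b) = max (min (-a) b) 0`. -/
def STR (a b : ℝ) : ℝ := max (min (-a) b) 0

-- `STR a b` is `min |a| |b|` when `a < 0 < b`, and `0` otherwise.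
lemma min_abs_sub_STR_le_abs {a b x : ℝ} (hax : a ≤ x) (hxb : x ≤ b) :
    min |a| |b| - STR a b ≤ |x| := by
  unfold STR
  grind [abs_of_nonneg, abs_of_neg]

lemma max_abs_sub_min_abs_add_STR_le {a b : ℝ} (hab : a ≤ b) :
    max |a| |b| - (min |a| |b| - STR a b) ≤ b - a := by
  unfold STR
  grind [abs_of_nonneg, abs_of_neg]

namespace MeasureTheory

variable {Ω : Type*} [MeasurableSpace Ω] {P : Measure Ω} {a b : Ω → ℝ}

lemma Integrable.max_abs_abs (ha : Integrable a P) (hb : Integrable b P) :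
    Integrable (fun ω => max |a ω| |b ω|) P :=
  ha.abs.sup hb.abs

lemma Integrable.min_abs_abs_sub_STR (ha : Integrable a P) (hb : Integrable b P) :
    Integrable (fun ω => min |a ω| |b ω| - STR (a ω) (b ω)) P :=
  (ha.abs.inf hb.abs).sub ((ha.neg.inf hb).sup (integrable_zero Ω ℝ P))

variable {l f u : Ω → ℝ}

lemma ae_sub_integral_le_sub_integral_le_sub_integral
    (hl : Integrable l P) (hf : Integrable f P) (hu : Integrable u P)
    (hlf : l ≤ᵐ[P] f) (hfu : f ≤ᵐ[P] u) :
    ∀ᵐ ω ∂P, l ω - ∫ ω, u ω ∂P ≤ f ω - ∫ ω, f ω ∂P ∧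
      f ω - ∫ ω, f ω ∂P ≤ u ω - ∫ ω, l ω ∂P := by
  have hfu_int := integral_mono_ae hf hu hfu
  have hlf_int := integral_mono_ae hl hf hlf
  filter_upwards [hlf, hfu] with ω hlfω hfuω
  constructor <;> linarith

theorem integral_min_abs_sub_STR_le_integral_abs_sub_integral [IsFiniteMeasure P]
    (hl : Integrable l P) (hf : Integrable f P) (hu : Integrable u P)
    (hlf : l ≤ᵐ[P] f) (hfu : f ≤ᵐ[P] u) :
    ∫ ω, (min |l ω - ∫ ω, u ω ∂P| |u ω - ∫ ω, l ω ∂P| -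
        STR (l ω - ∫ ω, u ω ∂P) (u ω - ∫ ω, l ω ∂P)) ∂P ≤
      ∫ ω, |f ω - ∫ ω, f ω ∂P| ∂P := by
  refine integral_mono_ae ((hl.sub (integrable_const _)).min_abs_abs_sub_STR
    (hu.sub (integrable_const _))) (hf.sub (integrable_const _)).abs ?_
  filter_upwards [ae_sub_integral_le_sub_integral_le_sub_integral hl hf hu hlf hfu]
    with ω ⟨hax, hxb⟩
  exact min_abs_sub_STR_le_abs hax hxb

theorem integral_abs_sub_integral_le_integral_max_abs [IsFiniteMeasure P]
    (hl : Integrable l P) (hf : Integrable f P) (hu : Integrable u P)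
    (hlf : l ≤ᵐ[P] f) (hfu : f ≤ᵐ[P] u) :
    ∫ ω, |f ω - ∫ ω, f ω ∂P| ∂P ≤
      ∫ ω, max |l ω - ∫ ω, u ω ∂P| |u ω - ∫ ω, l ω ∂P| ∂P := by
  refine integral_mono_ae (hf.sub (integrable_const _)).abs
    ((hl.sub (integrable_const _)).max_abs_abs (hu.sub (integrable_const _))) ?_
  filter_upwards [ae_sub_integral_le_sub_integral_le_sub_integral hl hf hu hlf hfu]
    with ω ⟨hax, hxb⟩
  exact abs_le_max_abs_abs hax hxb

theorem integral_max_abs_sub_integral_min_abs_sub_STR_le [IsProbabilityMeasure P]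
    (hl : Integrable l P) (hu : Integrable u P) (hlu : l ≤ᵐ[P] u) {c : ℝ}
    (hc : ∀ᵐ ω ∂P, u ω - l ω ≤ c) :
    (∫ ω, max |l ω - ∫ ω, u ω ∂P| |u ω - ∫ ω, l ω ∂P| ∂P) -
        ∫ ω, (min |l ω - ∫ ω, u ω ∂P| |u ω - ∫ ω, l ω ∂P| -
          STR (l ω - ∫ ω, u ω ∂P) (u ω - ∫ ω, l ω ∂P)) ∂P ≤ 2 * c := by
  set μl := ∫ ω, l ω ∂P
  set μu := ∫ ω, u ω ∂P
  have ha : Integrable (fun ω => l ω - μu) P := hl.sub (integrable_const _)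
  have hb : Integrable (fun ω => u ω - μl) P := hu.sub (integrable_const _)
  have hspread : μu - μl ≤ c := by
    rw [← integral_sub hu hl]
    simpa using integral_mono_ae (hu.sub hl) (integrable_const c) hc
  have hab : ∀ᵐ ω ∂P, l ω - μu ≤ u ω - μl := by
    have hμ : μl ≤ μu := integral_mono_ae hl hu hlu
    filter_upwards [hlu] with ω hω
    linarith
  calc (∫ ω, max |l ω - μu| |u ω - μl| ∂P) -
        ∫ ω, (min |l ω - μu| |u ω - μl| - STR (l ω - μu) (u ω - μl)) ∂P
      ≤ ∫ ω, ((u ω - μl) - (l ω - μu)) ∂P := by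
        rw [← integral_sub (ha.max_abs_abs hb) (ha.min_abs_abs_sub_STR hb)]
        refine integral_mono_ae ((ha.max_abs_abs hb).sub (ha.min_abs_abs_sub_STR hb))
          (hb.sub ha) ?_
        filter_upwards [hab] with ω hω
        exact max_abs_sub_min_abs_add_STR_le hω
    _ = (μu - μl) + (μu - μl) := by
        rw [integral_sub hb ha, integral_sub hu (integrable_const _),
          integral_sub hl (integrable_const _)]
        simp only [integral_const, probReal_univ, smul_eq_mul, one_mul]
        ring
    _ ≤ 2 * c := by linarith

end MeasureTheory

theorem stmt11_general {Ω : Type*} [MeasurableSpace Ω] (P : Measure Ω) [IsProbabilityMeasure P]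
    (l f u : Ω → ℝ) (hlm : Measurable l) (hfm : Measurable f) (hum : Measurable u)
    (C : ℝ) (hCl : ∀ ω, |l ω| ≤ C) (hCu : ∀ ω, |u ω| ≤ C)
    (hlf : ∀ ω, l ω ≤ f ω) (hfu : ∀ ω, f ω ≤ u ω)
    (μl μu m : ℝ) (hμl : μl = ∫ ω, l ω ∂P) (hμu : μu = ∫ ω, u ω ∂P)
    (hm : m = ∫ ω, f ω ∂P) :
    ((∫ ω, (min |l ω - μu| |u ω - μl| - STR (l ω - μu) (u ω - μl)) ∂P ≤
        ∫ ω, |f ω - m| ∂P) ∧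
     (∫ ω, |f ω - m| ∂P ≤ ∫ ω, max |l ω - μu| |u ω - μl| ∂P)) ∧
    (∀ c : ℝ, (∀ ω, u ω - l ω ≤ c) →
      (∫ ω, max |l ω - μu| |u ω - μl| ∂P) -
        (∫ ω, (min |l ω - μu| |u ω - μl| - STR (l ω - μu) (u ω - μl)) ∂P) ≤ 2 * c) := by
  subst hμl hμu hm
  have hl : Integrable l P := .of_bound hlm.aestronglyMeasurable C (ae_of_all _ hCl)
  have hu : Integrable u P := .of_bound hum.aestronglyMeasurable C (ae_of_all _ hCu)
  have hlf_ae : l ≤ᵐ[P] f := ae_of_all _ hlf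
  have hfu_ae : f ≤ᵐ[P] u := ae_of_all _ hfu
  have hf : Integrable f P :=
    integrable_of_le_of_le hfm.aestronglyMeasurable hlf_ae hfu_ae hl hu
  exact ⟨⟨integral_min_abs_sub_STR_le_integral_abs_sub_integral hl hf hu hlf_ae hfu_ae,
      integral_abs_sub_integral_le_integral_max_abs hl hf hu hlf_ae hfu_ae⟩,
    fun _ hc => integral_max_abs_sub_integral_min_abs_sub_STR_le hl hu
      (hlf_ae.trans hfu_ae) (ae_of_all _ hc)⟩

theorem stmt11 {Ω : Type*} [MeasurableSpace Ω] (P : Measure Ω) [IsProbabilityMeasure P]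
    (l f u : Ω → ℝ) (hlm : Measurable l) (hfm : Measurable f) (hum : Measurable u)
    (C : ℝ) (hC : 0 ≤ C) (hCl : ∀ ω, |l ω| ≤ C) (hCu : ∀ ω, |u ω| ≤ C)
    (hlf : ∀ ω, l ω ≤ f ω) (hfu : ∀ ω, f ω ≤ u ω)
    (μl μu m : ℝ) (hμl : μl = ∫ ω, l ω ∂P) (hμu : μu = ∫ ω, u ω ∂P)
    (hm : m = ∫ ω, f ω ∂P) :
    ((∫ ω, (min |l ω - μu| |u ω - μl| - STR (l ω - μu) (u ω - μl)) ∂P ≤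
        ∫ ω, |f ω - m| ∂P) ∧
     (∫ ω, |f ω - m| ∂P ≤ ∫ ω, max |l ω - μu| |u ω - μl| ∂P)) ∧
    (∀ c : ℝ, (∀ ω, u ω - l ω ≤ c) →
      (∫ ω, max |l ω - μu| |u ω - μl| ∂P) -
        (∫ ω, (min |l ω - μu| |u ω - μl| - STR (l ω - μu) (u ω - μl)) ∂P) ≤ 2 * c) :=
  stmt11_general P l f u hlm hfm hum C hCl hCu hlf hfu μl μu m hμl hμu hm
end

section
/- Let P be a probability measure on a measurable space Ω, and let l, f, u : Ω → ℝ be measurable functions for which there exists C ≥ 0 with |l(ω)| ≤ C and |u(ω)| ≤ C for all ω, and such that l(ω) ≤ f(ω) ≤ u(ω) for all ω ∈ Ω. Set μ_l = ∫ l dP, μ_u = ∫ u dP, m = ∫ f dP, and define ľ(ω) = l(ω) − μ_u and ǔ(ω) = u(ω) − μ_l. Then ∫ ( min{ľ(ω)², ǔ(ω)²} − STR(ľ(ω), ǔ(ω))² ) dP(ω) ≤ ∫ (f(ω) − m)² dP(ω) ≤ ∫ max{ľ(ω)², ǔ(ω)²} dP(ω). -/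
/-!
Since `μ_l ≤ m ≤ μ_u`, the centred function `f - m` is squeezed pointwise between
`ľ = l - μ_u` and `ǔ = u - μ_l`. So it suffices to bound `x²` for `a ≤ x ≤ b`: from above by
`max (a², b²)`, and from below by `min (a², b²) - STR(a, b)²`, which vanishes when `a ≤ 0 ≤ b`
(then `STR(a, b) = min (-a, b)`) and is at most `min (a², b²) ≤ x²` when `a, b` have the same sign.
-/

open MeasureTheory

theorem STR_eq_zero_of_pos {a : ℝ} (ha : 0 < a) (b : ℝ) : STR a b = 0 :=
  max_eq_right ((min_le_left _ _).trans (by linarith))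

theorem STR_eq_zero_of_neg (a : ℝ) {b : ℝ} (hb : b < 0) : STR a b = 0 :=
  max_eq_right ((min_le_right _ _).trans hb.le)

theorem STR_sq_of_nonpos_of_nonneg {a b : ℝ} (ha : a ≤ 0) (hb : 0 ≤ b) :
    STR a b ^ 2 = min (a ^ 2) (b ^ 2) := by
  rw [STR, max_eq_left (le_min (neg_nonneg.2 ha) hb), ← neg_sq a]
  rcases le_total (-a) b with h | h
  · rw [min_eq_left h, min_eq_left (pow_le_pow_left₀ (neg_nonneg.2 ha) h 2)]
  · rw [min_eq_right h, min_eq_right (pow_le_pow_left₀ hb h 2)]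

theorem STR_sq_le_min_sq (a b : ℝ) : STR a b ^ 2 ≤ min (a ^ 2) (b ^ 2) := by
  rcases lt_or_ge 0 a with ha | ha
  · rw [STR_eq_zero_of_pos ha, zero_pow two_ne_zero]; positivity
  rcases lt_or_ge b 0 with hb | hb
  · rw [STR_eq_zero_of_neg a hb, zero_pow two_ne_zero]; positivity
  exact (STR_sq_of_nonpos_of_nonneg ha hb).le

theorem min_sq_sub_STR_sq_le_sq {a x b : ℝ} (hax : a ≤ x) (hxb : x ≤ b) :
    min (a ^ 2) (b ^ 2) - STR a b ^ 2 ≤ x ^ 2 := by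
  rcases lt_or_ge 0 a with ha | ha
  · rw [STR_eq_zero_of_pos ha]
    nlinarith [min_le_left (a ^ 2) (b ^ 2)]
  rcases lt_or_ge b 0 with hb | hb
  · rw [STR_eq_zero_of_neg a hb]
    nlinarith [min_le_right (a ^ 2) (b ^ 2)]
  rw [STR_sq_of_nonpos_of_nonneg ha hb, sub_self]
  positivity

theorem sq_le_max_sq {a x b : ℝ} (hax : a ≤ x) (hxb : x ≤ b) :
    x ^ 2 ≤ max (a ^ 2) (b ^ 2) := by
  rcases le_total 0 x with hx | hx
  · exact le_max_of_le_right (by nlinarith)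
  · exact le_max_of_le_left (by nlinarith)

theorem MeasureTheory.MemLp.integrable_sq_sub_const {Ω : Type*} [MeasurableSpace Ω]
    {P : Measure Ω} [IsFiniteMeasure P] {g : Ω → ℝ} (hg : MemLp g ⊤ P) (c : ℝ) :
    Integrable (fun ω => (g ω - c) ^ 2) P :=
  ((hg.sub (memLp_const c)).mono_exponent le_top).integrable_sq

theorem stmt12_general {Ω : Type*} [MeasurableSpace Ω] (P : Measure Ω) [IsProbabilityMeasure P]
    (l f u : Ω → ℝ) (hlm : Measurable l) (hfm : Measurable f) (hum : Measurable u)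
    (C : ℝ) (hCl : ∀ ω, |l ω| ≤ C) (hCu : ∀ ω, |u ω| ≤ C)
    (hlf : ∀ ω, l ω ≤ f ω) (hfu : ∀ ω, f ω ≤ u ω)
    (μl μu m : ℝ) (hμl : μl = ∫ ω, l ω ∂P) (hμu : μu = ∫ ω, u ω ∂P)
    (hm : m = ∫ ω, f ω ∂P) :
    (∫ ω, (min ((l ω - μu) ^ 2) ((u ω - μl) ^ 2) - (STR (l ω - μu) (u ω - μl)) ^ 2) ∂P ≤
      ∫ ω, (f ω - m) ^ 2 ∂P) ∧
    (∫ ω, (f ω - m) ^ 2 ∂P ≤ ∫ ω, max ((l ω - μu) ^ 2) ((u ω - μl) ^ 2) ∂P) := by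
  have hCf (ω : Ω) : |f ω| ≤ C :=
    abs_le.2 ⟨(abs_le.1 (hCl ω)).1.trans (hlf ω), (hfu ω).trans (abs_le.1 (hCu ω)).2⟩
  have hl : MemLp l ⊤ P := memLp_top_of_bound hlm.aestronglyMeasurable C (ae_of_all _ hCl)
  have hf : MemLp f ⊤ P := memLp_top_of_bound hfm.aestronglyMeasurable C (ae_of_all _ hCf)
  have hu : MemLp u ⊤ P := memLp_top_of_bound hum.aestronglyMeasurable C (ae_of_all _ hCu)
  have hμl_le : μl ≤ m := hμl ▸ hm ▸ integral_mono (hl.integrable le_top) (hf.integrable le_top) hlf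
  have hm_le : m ≤ μu := hμu ▸ hm ▸ integral_mono (hf.integrable le_top) (hu.integrable le_top) hfu
  have hlower (ω : Ω) : l ω - μu ≤ f ω - m := by linarith [hlf ω]
  have hupper (ω : Ω) : f ω - m ≤ u ω - μl := by linarith [hfu ω]
  constructor
  · -- the lower integrand is nonnegative, so its integrability need not be checked
    refine integral_mono_of_nonneg (ae_of_all _ fun ω => ?_) (hf.integrable_sq_sub_const m)
      (ae_of_all _ fun ω => min_sq_sub_STR_sq_le_sq (hlower ω) (hupper ω))
    exact sub_nonneg.2 (STR_sq_le_min_sq _ _)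
  · exact integral_mono (hf.integrable_sq_sub_const m)
      ((hl.integrable_sq_sub_const μu).sup (hu.integrable_sq_sub_const μl))
      fun ω => sq_le_max_sq (hlower ω) (hupper ω)

theorem stmt12 {Ω : Type*} [MeasurableSpace Ω] (P : Measure Ω) [IsProbabilityMeasure P]
    (l f u : Ω → ℝ) (hlm : Measurable l) (hfm : Measurable f) (hum : Measurable u)
    (C : ℝ) (hC : 0 ≤ C) (hCl : ∀ ω, |l ω| ≤ C) (hCu : ∀ ω, |u ω| ≤ C)
    (hlf : ∀ ω, l ω ≤ f ω) (hfu : ∀ ω, f ω ≤ u ω)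
    (μl μu m : ℝ) (hμl : μl = ∫ ω, l ω ∂P) (hμu : μu = ∫ ω, u ω ∂P)
    (hm : m = ∫ ω, f ω ∂P) :
    (∫ ω, (min ((l ω - μu) ^ 2) ((u ω - μl) ^ 2) - (STR (l ω - μu) (u ω - μl)) ^ 2) ∂P ≤
      ∫ ω, (f ω - m) ^ 2 ∂P) ∧
    (∫ ω, (f ω - m) ^ 2 ∂P ≤ ∫ ω, max ((l ω - μu) ^ 2) ((u ω - μl) ^ 2) ∂P) :=
  stmt12_general P l f u hlm hfm hum C hCl hCu hlf hfu μl μu m hμl hμu hm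
end

section
/- Let t, d be natural numbers, X a t × d real matrix, s : Fin t → ℝ with s(i) > 0 for all i, and c > 0. Let S = diagonal(s), let X̃ = diagonal(i ↦ (√(s(i)))⁻¹) · X, and let I_t denote the t × t identity matrix. Then Xᵀ · (X·Xᵀ + c·S)⁻¹ · X = X̃ᵀ · (X̃·X̃ᵀ + c·I_t)⁻¹ · X̃, where both inverted matrices are invertible (each is the sum of a positive semidefinite matrix and a positive definite matrix). -/
/-!
Writing `D = diagonal √s`, we have `X = D X̃` and `S = D Dᵀ`, so `X Xᵀ + c S = D (X̃ X̃ᵀ + c I) Dᵀ`.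
Inverting this congruence, the outer factors `D` cancel against the `Dᵀ⁻¹` and `D⁻¹` it produces.
-/

open Matrix

namespace Matrix

variable {m n R : Type*} [Fintype m]

theorem transpose_mul_inv_mul_of_congr [DecidableEq m] [CommRing R] {D : Matrix m m R}
    (hD : IsUnit D) (M : Matrix m m R) (Y : Matrix m n R) :
    (D * Y)ᵀ * (D * M * Dᵀ)⁻¹ * (D * Y) = Yᵀ * M⁻¹ * Y := by
  have hDdet : IsUnit D.det := (isUnit_iff_isUnit_det D).mp hD
  have hDtdet : IsUnit Dᵀ.det := by rwa [det_transpose]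
  calc (D * Y)ᵀ * (D * M * Dᵀ)⁻¹ * (D * Y)
      = Yᵀ * (Dᵀ * Dᵀ⁻¹) * M⁻¹ * (D⁻¹ * D) * Y := by
        simp only [transpose_mul, mul_inv_rev, Matrix.mul_assoc]
    _ = Yᵀ * M⁻¹ * Y := by
        rw [mul_nonsing_inv _ hDtdet, nonsing_inv_mul _ hDdet, Matrix.mul_one, Matrix.mul_one]

theorem mul_transpose_add_smul_congr [Fintype n] [DecidableEq m] [CommRing R]
    (D : Matrix m m R) (Y : Matrix m n R) (c : R) :
    (D * Y) * (D * Y)ᵀ + c • (D * Dᵀ) = D * (Y * Yᵀ + c • 1) * Dᵀ := by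
  simp only [transpose_mul, Matrix.mul_add, Matrix.add_mul, Matrix.mul_smul, Matrix.smul_mul,
    Matrix.mul_one, Matrix.mul_assoc]

theorem posDef_mul_transpose_add_smul [Fintype n] {Y : Matrix m n ℝ} {S : Matrix m m ℝ}
    (hS : S.PosDef) {c : ℝ} (hc : 0 < c) : (Y * Yᵀ + c • S).PosDef := by
  have hY := posSemidef_self_mul_conjTranspose Y
  rw [conjTranspose_eq_transpose_of_trivial] at hY
  exact PosDef.posSemidef_add hY (hS.smul hc)

end Matrix

theorem stmt15 (t d : ℕ) (X : Matrix (Fin t) (Fin d) ℝ) (s : Fin t → ℝ)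
    (hs : ∀ i, 0 < s i) (c : ℝ) (hc : 0 < c)
    (S : Matrix (Fin t) (Fin t) ℝ) (hS : S = Matrix.diagonal s)
    (Xt : Matrix (Fin t) (Fin d) ℝ)
    (hXt : Xt = Matrix.diagonal (fun i => (Real.sqrt (s i))⁻¹) * X) :
    (IsUnit (X * Xᵀ + c • S) ∧
     IsUnit (Xt * Xtᵀ + c • (1 : Matrix (Fin t) (Fin t) ℝ))) ∧
    Xᵀ * (X * Xᵀ + c • S)⁻¹ * X =
      Xtᵀ * (Xt * Xtᵀ + c • (1 : Matrix (Fin t) (Fin t) ℝ))⁻¹ * Xt := by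
  set D : Matrix (Fin t) (Fin t) ℝ := diagonal fun i => √(s i)
  have hsqrt : ∀ i, √(s i) ≠ 0 := fun i => (Real.sqrt_pos.mpr (hs i)).ne'
  have hD : IsUnit D := isUnit_diagonal.mpr <| Pi.isUnit_iff.mpr fun i => (hsqrt i).isUnit
  have hX : X = D * Xt := by
    rw [hXt, ← Matrix.mul_assoc, diagonal_mul_diagonal]
    simp [hsqrt]
  have hSD : S = D * Dᵀ := by
    rw [hS, diagonal_transpose, diagonal_mul_diagonal]
    simp [Real.mul_self_sqrt (hs _).le]
  refine ⟨⟨?_, ?_⟩, ?_⟩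
  · exact (posDef_mul_transpose_add_smul (hS ▸ posDef_diagonal_iff.mpr hs) hc).isUnit
  · exact (posDef_mul_transpose_add_smul PosDef.one hc).isUnit
  · rw [hSD, hX, mul_transpose_add_smul_congr D, transpose_mul_inv_mul_of_congr hD]
end
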